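/- (Theorem 4.7, characterization of adjointable bounded operators.) Let T : H →L[K] H. Then T is adjointable (there exists S : H →L[K] H with ⟪x, T y⟫ = ⟪S x, y⟫ for all x, y) if and only if for every m : ℕ, Tendsto (fun n => (T (e n)) m) atTop (nhds 0) (each row of the matrix of T tends to 0). Moreover, if S is an adjoint of T then its matrix is the conjugate transpose, (S (e n)) m = star ((T (e m)) n) for all m, n, and ‖S‖ = ‖T‖. -/

import Mathlib

/-!
The entry `(T (e n)) m` of the matrix of `T` is `⟪e m, T (e n)⟫`, so an adjoint `S` has the
conjugate-transpose matrix; its columns `S (e m)` vanish at infinity, which forces the rows of `T`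
to tend to zero. Conversely, if they do, the vectors `T (e n)` are bounded by `‖T‖` and tend to zero
coordinatewise; truncating `x` and using the ultrametric inequality then gives
`⟪T (e n), x⟫ → 0`, so `x ↦ (n ↦ ⟪T (e n), x⟫)` is an operator on `H`. It is an adjoint of `T`
because both sides of `⟪x, T y⟫ = ⟪S x, y⟫` are continuous in `y` and agree on the basis.
Finally `(S x) n = star ⟪x, T (e n)⟫` and `‖⟪x, y⟫‖ ≤ ‖x‖ ‖y‖` give `‖S‖ ≤ ‖T‖`, and the
relation is symmetric.
-/

open Filter

noncomputable section

variable (K : Type*) [NontriviallyNormedField K] [IsUltrametricDist K]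
  [CompleteSpace K] [StarRing K] [NormedStarGroup K]

/-- The p-adic coordinate Hilbert space: zero-convergent sequences in `K` with sup norm. -/
abbrev H := ZeroAtInftyContinuousMap ℕ K

/-- The standard basis vectors of `H K`. -/
def e (n : ℕ) : H K where
  toFun := fun m => if m = n then 1 else 0
  continuous_toFun := continuous_of_discreteTopology
  zero_at_infty' := by
    rw [cocompact_eq_atTop]
    refine Filter.Tendsto.congr' ?_ tendsto_const_nhds
    filter_upwards [Filter.eventually_gt_atTop n] with m hm
    simp [Nat.ne_of_gt hm]

/-- The canonical inner product on `H K`: `⟪x, y⟫ = ∑' i, star (x i) * y i`. -/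
def inner' (x y : H K) : K := ∑' i, star (x i) * y i

/-- A bounded operator is of trace class if its matrix entries vanish along the
cofinite filter of `ℕ × ℕ`. -/
def IsTraceClass (T : H K →L[K] H K) : Prop :=
  Tendsto (fun q : ℕ × ℕ => (T (e K q.2)) q.1) Filter.cofinite (nhds 0)

open scoped ZeroAtInfty Topology

namespace ZeroAtInftyContinuousMap

variable {α β : Type*} [TopologicalSpace α]

theorem norm_coe_le_norm [SeminormedAddCommGroup β] (f : C₀(α, β)) (x : α) : ‖f x‖ ≤ ‖f‖ :=
  f.toBCF.norm_coe_le_norm x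

theorem norm_le [SeminormedAddCommGroup β] {f : C₀(α, β)} {C : ℝ} (hC : 0 ≤ C) :
    ‖f‖ ≤ C ↔ ∀ x, ‖f x‖ ≤ C :=
  BoundedContinuousFunction.norm_le (f := f.toBCF) hC

theorem finsetSum_apply [AddCommMonoid β] [TopologicalSpace β] [ContinuousAdd β] {ι : Type*}
    (s : Finset ι) (f : ι → C₀(α, β)) (x : α) : (∑ i ∈ s, f i) x = ∑ i ∈ s, f i x :=
  map_sum (⟨⟨fun g : C₀(α, β) => g x, rfl⟩, fun _ _ => rfl⟩ : C₀(α, β) →+ β) f s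

theorem tendsto_atTop_nhds_zero [Zero β] [TopologicalSpace β] (f : C₀(ℕ, β)) :
    Tendsto f atTop (𝓝 0) := by
  simpa only [cocompact_eq_atTop] using zero_at_infty f

end ZeroAtInftyContinuousMap

open ZeroAtInftyContinuousMap

section Basis

variable {𝕜 : Type*} [NontriviallyNormedField 𝕜]

theorem e_apply (n m : ℕ) : e 𝕜 n m = if m = n then 1 else 0 := rfl

theorem norm_e_le_one (n : ℕ) : ‖e 𝕜 n‖ ≤ 1 :=
  (norm_le zero_le_one).2 fun m => by rw [e_apply]; split_ifs <;> simp

theorem finsetSum_smul_e_apply (y : H 𝕜) (s : Finset ℕ) (m : ℕ) :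
    (∑ n ∈ s, y n • e 𝕜 n) m = if m ∈ s then y m else 0 := by
  simp [finsetSum_apply, e_apply]

theorem norm_sub_finsetSum_smul_e_le (y : H 𝕜) (s : Finset ℕ) {C : ℝ} (hC : 0 ≤ C)
    (h : ∀ m ∉ s, ‖y m‖ ≤ C) : ‖y - ∑ n ∈ s, y n • e 𝕜 n‖ ≤ C := by
  refine (norm_le hC).2 fun m => ?_
  rw [coe_sub, Pi.sub_apply, finsetSum_smul_e_apply]
  split_ifs with hm
  · simpa using hC
  · simpa using h m hm

theorem hasSum_smul_e (y : H 𝕜) : HasSum (fun n => y n • e 𝕜 n) y := by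
  rw [HasSum, SummationFilter.unconditional_filter, Metric.tendsto_atTop]
  intro ε hε
  obtain ⟨N, hN⟩ := Metric.tendsto_atTop.mp (tendsto_atTop_nhds_zero y) (ε / 2) (half_pos hε)
  refine ⟨Finset.range N, fun s hs => ?_⟩
  have htail : ‖y - ∑ n ∈ s, y n • e 𝕜 n‖ ≤ ε / 2 := by
    refine norm_sub_finsetSum_smul_e_le y s (half_pos hε).le fun m hm => ?_
    have hNm : N ≤ m := not_lt.mp fun hlt => hm (hs (Finset.mem_range.mpr hlt))
    simpa using (hN m hNm).le
  rw [dist_eq_norm, norm_sub_rev]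
  linarith

theorem ContinuousLinearMap.ext_e {F : Type*} [AddCommMonoid F] [Module 𝕜 F] [TopologicalSpace F]
    [T2Space F] {f g : H 𝕜 →L[𝕜] F} (h : ∀ n, f (e 𝕜 n) = g (e 𝕜 n)) : f = g := by
  ext y
  refine ((hasSum_smul_e y).mapL f).unique ?_
  simpa only [map_smul, h] using (hasSum_smul_e y).mapL g

theorem ContinuousLinearMap.norm_apply_e_le (T : H 𝕜 →L[𝕜] H 𝕜) (n : ℕ) : ‖T (e 𝕜 n)‖ ≤ ‖T‖ :=
  T.le_of_opNorm_le_of_le le_rfl (norm_e_le_one n) |>.trans_eq (mul_one _)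

end Basis

section InnerProduct

variable {𝕜 : Type*} [NontriviallyNormedField 𝕜] [StarRing 𝕜]

theorem inner'_e_left (y : H 𝕜) (m : ℕ) : inner' 𝕜 (e 𝕜 m) y = y m := by
  rw [inner', tsum_eq_single m fun i hi => by simp [e_apply, hi]]
  simp [e_apply]

theorem inner'_e_right (x : H 𝕜) (n : ℕ) : inner' 𝕜 x (e 𝕜 n) = star (x n) := by
  rw [inner', tsum_eq_single n fun i hi => by simp [e_apply, hi]]
  simp [e_apply]

def IsAdjoint (T S : H 𝕜 →L[𝕜] H 𝕜) : Prop :=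
  ∀ x y, inner' 𝕜 x (T y) = inner' 𝕜 (S x) y

theorem IsAdjoint.apply_e_apply {T S : H 𝕜 →L[𝕜] H 𝕜} (hS : IsAdjoint T S) (m n : ℕ) :
    S (e 𝕜 n) m = star (T (e 𝕜 m) n) := by
  have h := hS (e 𝕜 n) (e 𝕜 m)
  rw [inner'_e_left, inner'_e_right] at h
  rw [h, star_star]

variable [NormedStarGroup 𝕜]

theorem star_inner' (x y : H 𝕜) : star (inner' 𝕜 x y) = inner' 𝕜 y x := by
  simp only [inner', tsum_star, star_mul, star_star]

theorem IsAdjoint.symm {T S : H 𝕜 →L[𝕜] H 𝕜} (hS : IsAdjoint T S) : IsAdjoint S T := by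
  intro x y
  rw [← star_inner', ← hS, star_inner']

theorem IsAdjoint.tendsto_apply_e {T S : H 𝕜 →L[𝕜] H 𝕜} (hS : IsAdjoint T S) (m : ℕ) :
    Tendsto (fun n => T (e 𝕜 n) m) atTop (𝓝 0) := by
  have h := (tendsto_atTop_nhds_zero (S (e 𝕜 m))).star
  simp only [star_zero] at h
  exact h.congr fun n => by rw [hS.apply_e_apply, star_star]

variable [IsUltrametricDist 𝕜]

theorem norm_inner'_le (x y : H 𝕜) : ‖inner' 𝕜 x y‖ ≤ ‖x‖ * ‖y‖ :=
  IsUltrametricDist.norm_tsum_le_of_forall_le_of_nonneg (by positivity) fun i => by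
    rw [norm_mul, norm_star]
    exact mul_le_mul (norm_coe_le_norm x i) (norm_coe_le_norm y i) (norm_nonneg _) (norm_nonneg _)

theorem IsAdjoint.opNorm_le {T S : H 𝕜 →L[𝕜] H 𝕜} (hS : IsAdjoint T S) : ‖S‖ ≤ ‖T‖ := by
  refine S.opNorm_le_bound (norm_nonneg T) fun x => (norm_le (by positivity)).2 fun n => ?_
  calc ‖S x n‖ = ‖inner' 𝕜 x (T (e 𝕜 n))‖ := by rw [hS, inner'_e_right, norm_star]
    _ ≤ ‖x‖ * ‖T (e 𝕜 n)‖ := norm_inner'_le _ _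
    _ ≤ ‖T‖ * ‖x‖ := by rw [mul_comm]; gcongr; exact T.norm_apply_e_le n

theorem IsAdjoint.opNorm_eq {T S : H 𝕜 →L[𝕜] H 𝕜} (hS : IsAdjoint T S) : ‖S‖ = ‖T‖ :=
  hS.opNorm_le.antisymm hS.symm.opNorm_le

variable [CompleteSpace 𝕜]

theorem summable_inner' (x y : H 𝕜) : Summable fun i => star (x i) * y i := by
  refine NonarchimedeanAddGroup.summable_of_tendsto_cofinite_zero ?_
  rw [Nat.cofinite_eq_atTop]
  refine squeeze_zero_norm (fun i => ?_)
    (by simpa using (tendsto_atTop_nhds_zero x).norm.mul_const ‖y‖)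
  rw [norm_mul, norm_star]
  exact mul_le_mul_of_nonneg_left (norm_coe_le_norm y i) (norm_nonneg _)

def innerCLM (x : H 𝕜) : H 𝕜 →L[𝕜] 𝕜 :=
  LinearMap.mkContinuous
    { toFun := inner' 𝕜 x
      map_add' := fun y z => by
        simp only [inner', coe_add, Pi.add_apply, mul_add]
        exact (summable_inner' x y).tsum_add (summable_inner' x z)
      map_smul' := fun c y => by
        simp only [inner', coe_smul, Pi.smul_apply, smul_eq_mul, RingHom.id_apply]
        rw [← tsum_mul_left]
        exact tsum_congr fun i => mul_left_comm _ _ _ }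
    ‖x‖ (norm_inner'_le x)

theorem innerCLM_apply (x y : H 𝕜) : innerCLM x y = inner' 𝕜 x y := rfl

theorem inner'_finsetSum_smul_e (y x : H 𝕜) (s : Finset ℕ) :
    inner' 𝕜 y (∑ i ∈ s, x i • e 𝕜 i) = ∑ i ∈ s, x i * star (y i) := by
  rw [← innerCLM_apply, map_sum]
  simp only [map_smul, innerCLM_apply, inner'_e_right, smul_eq_mul]

theorem tendsto_inner'_of_tendsto_apply {ι : Type*} {l : Filter ι} {v : ι → H 𝕜} {C : ℝ}
    (hC : ∀ n, ‖v n‖ ≤ C) (hv : ∀ i, Tendsto (fun n => v n i) l (𝓝 0)) (x : H 𝕜) :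
    Tendsto (fun n => inner' 𝕜 (v n) x) l (𝓝 0) := by
  refine NormedAddGroup.tendsto_nhds_zero.2 fun ε hε => ?_
  obtain ⟨M, hM0, hM⟩ : ∃ M > 0, ∀ n, ‖v n‖ < M :=
    ⟨max C 0 + 1, by positivity, fun n => by linarith [hC n, le_max_left C 0]⟩
  obtain ⟨N, hN⟩ := Metric.tendsto_atTop.mp (tendsto_atTop_nhds_zero x) (ε / M) (by positivity)
  set p := ∑ i ∈ Finset.range N, x i • e 𝕜 i
  have htail : ‖x - p‖ ≤ ε / M :=
    norm_sub_finsetSum_smul_e_le x _ (by positivity) fun m hm => by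
      simpa using (hN m (by simpa using hm)).le
  have hhead : Tendsto (fun n => inner' 𝕜 (v n) p) l (𝓝 0) := by
    simp only [p, inner'_finsetSum_smul_e]
    simpa using tendsto_finsetSum _ fun i _ => (hv i).star.const_mul (x i)
  filter_upwards [NormedAddGroup.tendsto_nhds_zero.1 hhead ε hε] with n hn
  rw [← add_sub_cancel p x, ← innerCLM_apply, map_add]
  refine (IsUltrametricDist.norm_add_le_max _ _).trans_lt (max_lt hn ?_)
  calc ‖inner' 𝕜 (v n) (x - p)‖ ≤ ‖v n‖ * ‖x - p‖ := norm_inner'_le _ _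
    _ ≤ ‖v n‖ * (ε / M) := by gcongr
    _ < M * (ε / M) := by gcongr; exact hM n
    _ = ε := by field_simp

def adjointOfTendsto (T : H 𝕜 →L[𝕜] H 𝕜)
    (hT : ∀ m, Tendsto (fun n => T (e 𝕜 n) m) atTop (𝓝 0)) : H 𝕜 →L[𝕜] H 𝕜 :=
  LinearMap.mkContinuous
    { toFun := fun x =>
        ⟨⟨fun n => inner' 𝕜 (T (e 𝕜 n)) x, continuous_of_discreteTopology⟩, by
          rw [cocompact_eq_atTop]; exact tendsto_inner'_of_tendsto_apply T.norm_apply_e_le hT x⟩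
      map_add' := fun x y => by ext n; exact map_add (innerCLM (T (e 𝕜 n))) x y
      map_smul' := fun c x => by ext n; exact map_smul (innerCLM (T (e 𝕜 n))) c x }
    ‖T‖ fun x => (norm_le (by positivity)).2 fun n =>
      (norm_inner'_le _ _).trans (by gcongr; exact T.norm_apply_e_le n)

theorem adjointOfTendsto_apply (T : H 𝕜 →L[𝕜] H 𝕜)
    (hT : ∀ m, Tendsto (fun n => T (e 𝕜 n) m) atTop (𝓝 0)) (x : H 𝕜) (n : ℕ) :
    adjointOfTendsto T hT x n = inner' 𝕜 (T (e 𝕜 n)) x := rfl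

theorem isAdjoint_adjointOfTendsto (T : H 𝕜 →L[𝕜] H 𝕜)
    (hT : ∀ m, Tendsto (fun n => T (e 𝕜 n) m) atTop (𝓝 0)) :
    IsAdjoint T (adjointOfTendsto T hT) := by
  intro x y
  have h : (innerCLM x).comp T = innerCLM (adjointOfTendsto T hT x) :=
    ContinuousLinearMap.ext_e fun n => by
      simp only [ContinuousLinearMap.comp_apply, innerCLM_apply, inner'_e_right,
        adjointOfTendsto_apply, star_inner']
  exact DFunLike.congr_fun h y

end InnerProduct

/-- A bounded operator is adjointable iff each row of its matrix tends to 0; the adjoint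
has the conjugate-transpose matrix and the same norm. -/
theorem stmt4 (T : H K →L[K] H K) :
    ((∃ S : H K →L[K] H K, ∀ x y : H K, inner' K x (T y) = inner' K (S x) y) ↔
      ∀ m : ℕ, Tendsto (fun n => (T (e K n)) m) atTop (nhds 0)) ∧
    (∀ S : H K →L[K] H K, (∀ x y : H K, inner' K x (T y) = inner' K (S x) y) →
      (∀ m n : ℕ, (S (e K n)) m = star ((T (e K m)) n)) ∧ ‖S‖ = ‖T‖) :=
  ⟨⟨fun ⟨_, hS⟩ => IsAdjoint.tendsto_apply_e hS,
      fun hT => ⟨adjointOfTendsto T hT, isAdjoint_adjointOfTendsto T hT⟩⟩,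
    fun _ hS => ⟨IsAdjoint.apply_e_apply hS, IsAdjoint.opNorm_eq hS⟩⟩
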